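/- arXiv:1204.5075 — 3 statements merged into one kernel-verified Lean document; each statement's English description precedes it below -/
import Mathlib

section
/- Let F be a free group of rank at least 2. Then the set NE ⊆ F × F is not equational; that is, for every natural number N there exists a finite sequence q₁, …, q_m of elements of F with m > N such that the partial intersections ⋂_{i=1}^{j} NE_{q_i} (for j = 1, …, m) form a strictly decreasing sequence of subsets of F. -/
open FirstOrder

/-- The definable set `NE ⊆ F × F`: pairs `(p, q)` such that `q·p = x₁^10·x₂^{-9}`
for some non-commuting `x₁, x₂`. -/
def NE (F : Type*) [Group F] : Set (F × F) :=
  {pq | ∃ x₁ x₂ : F, pq.2 * pq.1 = x₁ ^ 10 * x₂ ^ (-9 : ℤ) ∧ x₁ * x₂ ≠ x₂ * x₁}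

/-- The fiber `D_q = {p | (p, q) ∈ D}` of a relation `D ⊆ F × F`. -/
def fiber {F : Type*} (D : Set (F × F)) (q : F) : Set F := {p | (p, q) ∈ D}

/-- A relation `D ⊆ F × F` is equational if there is a uniform bound `N` on the length of
sequences `q₁, …, q_m` whose partial intersections `⋂_{i ≤ j} D_{q_i}` are strictly decreasing. -/
def IsEquational {F : Type*} (D : Set (F × F)) : Prop :=
  ∃ N : ℕ, ∀ (m : ℕ) (q : Fin m → F),
    StrictAnti (fun j : Fin m => ⋂ i ∈ Finset.Iic j, fiber D (q i)) → m ≤ N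

/-!
Let `S` be the set of products `x₁^10 x₂^-9` with `x₁, x₂` non-commuting, so that
`NE_q = q⁻¹ S`. For generators `a ≠ b` put `gₙ = a^{10n} b^{-9n}` and `qₙ = gₙ⁻¹`.
For `i < j = i + k`, `gᵢ⁻¹ gⱼ` is the conjugate of `(a^k)^10 (b^k)^-9` by `b^{9i}`, and
`a^k`, `b^k` do not commute, so `gⱼ ∈ NE_{qᵢ}`. On the other hand `gⱼ ∉ NE_{qⱼ}`, since
`1 ∈ S` would need `x₁^10 = x₂^9` for non-commuting `x₁, x₂`. That is impossible in a
free group: `x₁, x₂` generate a free subgroup (Nielsen–Schreier), and if its rank were at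
least `2`, its abelianization would map onto `ℤ²` with `x₁, x₂` going to linearly dependent
generators. Hence `gⱼ₊₁` witnesses that the `(j+1)`-st partial intersection is strictly
smaller than the `j`-th.
-/

lemma AddSubgroup.closure_pair_ne_top_of_smul_eq_smul {u v : ℤ × ℤ} {m n : ℤ} (hm : m ≠ 0)
    (h : m • u = n • v) : AddSubgroup.closure {u, v} ≠ ⊤ := by
  intro htop
  obtain ⟨a, b, hab⟩ := AddSubgroup.mem_closure_pair.1 (htop ▸ mem_top ((1, 0) : ℤ × ℤ))
  obtain ⟨c, d, hcd⟩ := AddSubgroup.mem_closure_pair.1 (htop ▸ mem_top ((0, 1) : ℤ × ℤ))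
  simp only [Prod.ext_iff, Prod.smul_fst, Prod.smul_snd, Prod.fst_add, Prod.snd_add,
    smul_eq_mul] at h hab hcd
  have hdet : u.1 * v.2 - u.2 * v.1 = 0 := by
    refine (mul_eq_zero.1 ?_).resolve_left hm
    linear_combination v.2 * h.1 - v.1 * h.2
  -- `1 = det(e₁, e₂) = (ad - bc) · det(u, v)`
  have : (1 : ℤ) = (a * d - b * c) * (u.1 * v.2 - u.2 * v.1) := by
    linear_combination -(c * u.2 + d * v.2) * hab.1 - hcd.2 + (c * u.1 + d * v.1) * hab.2
  simp [hdet] at this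

lemma AddSubgroup.eq_top_of_one_zero_mem_of_zero_one_mem {H : AddSubgroup (ℤ × ℤ)}
    (h₁ : ((1, 0) : ℤ × ℤ) ∈ H) (h₂ : ((0, 1) : ℤ × ℤ) ∈ H) : H = ⊤ := by
  refine eq_top_iff.2 fun w _ => ?_
  have hw : w = w.1 • ((1, 0) : ℤ × ℤ) + w.2 • ((0, 1) : ℤ × ℤ) := by ext <;> simp
  rw [hw]
  exact add_mem (zsmul_mem h₁ _) (zsmul_mem h₂ _)

namespace FreeGroup

variable {α : Type*}

lemma commute_of_subsingleton [Subsingleton α] (x y : FreeGroup α) : Commute x y := by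
  cases isEmpty_or_nonempty α
  · exact Subsingleton.elim _ _
  · have : Unique α := uniqueOfSubsingleton (Classical.arbitrary α)
    exact IsCyclic.isMulCommutative.is_comm.comm x y

lemma isReduced_of_forall_snd {L : List (α × Bool)} (hL : ∀ x ∈ L, x.2 = true) :
    IsReduced L :=
  List.Pairwise.isChain <| List.pairwise_of_forall_mem_list fun x hx y hy _ =>
    (hL x hx).trans (hL y hy).symm

lemma of_pow_mul_of_pow_ne {a b : α} (hab : a ≠ b) {n : ℕ} (hn : n ≠ 0) :
    of a ^ n * of b ^ n ≠ of b ^ n * of a ^ n := by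
  classical
  have toWord_eq (c d : α) : (of c ^ n * of d ^ n).toWord
      = List.replicate n (c, true) ++ List.replicate n (d, true) := by
    rw [toWord_mul, toWord_of_pow, toWord_of_pow]
    refine IsReduced.reduce_eq (isReduced_of_forall_snd fun x hx => ?_)
    simp only [List.mem_append, List.mem_replicate] at hx
    grind
  intro h
  have := congrArg toWord h
  rw [toWord_eq, toWord_eq] at this
  obtain ⟨k, rfl⟩ := Nat.exists_eq_succ_of_ne_zero hn
  simp [List.replicate_succ, hab] at this

end FreeGroup

namespace IsFreeGroup

variable {G : Type*} [Group G] [IsFreeGroup G]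

lemma commute_of_subsingleton_generators [Subsingleton (Generators G)] (x y : G) :
    Commute x y := by
  simpa using (FreeGroup.commute_of_subsingleton (toFreeGroup G x) (toFreeGroup G y)).map
    (toFreeGroup G).symm

lemma commute_of_closure_pair_eq_top {x y : G} (hxy : Subgroup.closure {x, y} = ⊤) {m n : ℤ}
    (hm : m ≠ 0) (h : x ^ m = y ^ n) : Commute x y := by
  classical
  cases subsingleton_or_nontrivial (Generators G)
  · exact commute_of_subsingleton_generators x y
  exfalso
  obtain ⟨s, t, hst⟩ := exists_pair_ne (Generators G)
  let φ : G →* Multiplicative (ℤ × ℤ) :=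
    lift fun r => .ofAdd (if r = s then (1, 0) else if r = t then (0, 1) else 0)
  let u := (φ x).toAdd
  let v := (φ y).toAdd
  have mem_closure (g : G) : (φ g).toAdd ∈ AddSubgroup.closure {u, v} := by
    have hg : φ g ∈ (Subgroup.closure {x, y}).map φ :=
      Subgroup.mem_map_of_mem φ (hxy ▸ Subgroup.mem_top g)
    rw [MonoidHom.map_closure, Set.image_pair, Subgroup.mem_closure_pair] at hg
    obtain ⟨a, b, hab⟩ := hg
    exact AddSubgroup.mem_closure_pair.2 ⟨a, b, congrArg Multiplicative.toAdd hab⟩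
  have hrel : m • u = n • v := by simp only [u, v, ← toAdd_zpow, ← map_zpow, h]
  refine AddSubgroup.closure_pair_ne_top_of_smul_eq_smul hm hrel
    (AddSubgroup.eq_top_of_one_zero_mem_of_zero_one_mem ?_ ?_)
  · simpa [φ] using mem_closure (of s)
  · simpa [φ, hst.symm] using mem_closure (of t)

lemma commute_of_zpow_eq_zpow {x y : G} {m n : ℤ} (hm : m ≠ 0) (h : x ^ m = y ^ n) :
    Commute x y := by
  let H := Subgroup.closure {x, y}
  let x' : H := ⟨x, Subgroup.subset_closure (by simp)⟩
  let y' : H := ⟨y, Subgroup.subset_closure (by simp)⟩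
  have hgen : Subgroup.closure {x', y'} = ⊤ := by
    convert Subgroup.closure_closure_coe_preimage (k := {x, y})
    ext ⟨g, hg⟩
    simp [x', y', Subtype.ext_iff]
  have h' : x' ^ m = y' ^ n := Subtype.ext (by simpa using h)
  exact congrArg Subtype.val (commute_of_closure_pair_eq_top hgen hm h')

end IsFreeGroup

def noncommPowProducts (F : Type*) [Group F] : Set F :=
  {w | ∃ x₁ x₂ : F, w = x₁ ^ 10 * x₂ ^ (-9 : ℤ) ∧ x₁ * x₂ ≠ x₂ * x₁}

section noncommPowProducts

variable {F : Type*} [Group F]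

lemma mem_fiber_NE_iff {p q : F} : p ∈ fiber (NE F) q ↔ q * p ∈ noncommPowProducts F :=
  Iff.rfl

lemma conj_mem_noncommPowProducts {w : F} (c : F) (hw : w ∈ noncommPowProducts F) :
    c * w * c⁻¹ ∈ noncommPowProducts F := by
  obtain ⟨x₁, x₂, rfl, hne⟩ := hw
  refine ⟨c * x₁ * c⁻¹, c * x₂ * c⁻¹, ?_, fun h => hne ?_⟩
  · rw [conj_pow, conj_zpow]
    group
  simpa [mul_assoc] using congrArg (· * c) h

lemma one_notMem_noncommPowProducts [IsFreeGroup F] : (1 : F) ∉ noncommPowProducts F := by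
  rintro ⟨x₁, x₂, h, hne⟩
  refine hne (IsFreeGroup.commute_of_zpow_eq_zpow (m := 10) (n := 9) (by norm_num) ?_)
  rw [eq_comm, mul_eq_one_iff_eq_inv, ← zpow_neg, neg_neg] at h
  exact_mod_cast h

lemma FreeGroup.of_pow_mul_of_pow_mem_noncommPowProducts {α : Type*} {a b : α} (hab : a ≠ b)
    {k : ℕ} (hk : k ≠ 0) :
    (of a ^ k) ^ 10 * (of b ^ k) ^ (-9 : ℤ) ∈ noncommPowProducts (FreeGroup α) :=
  ⟨_, _, rfl, FreeGroup.of_pow_mul_of_pow_ne hab hk⟩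

end noncommPowProducts

lemma strictAnti_biInter_fiber {F : Type*} {D : Set (F × F)} {p q : ℕ → F}
    (hlt : ∀ i j, i < j → p j ∈ fiber D (q i)) (hself : ∀ j, p j ∉ fiber D (q j)) (m : ℕ) :
    StrictAnti fun j : Fin m => ⋂ i ∈ Finset.Iic j, fiber D (q i) := by
  intro j j' hjj'
  have hsucc : (j : ℕ) + 1 < m := lt_of_le_of_lt hjj' j'.isLt
  refine (Set.biInter_subset_biInter_left ?_).ssubset_of_mem_notMem
    (a := p (j + 1)) ?_ fun hmem => hself (j + 1) ?_
  · exact_mod_cast Finset.Iic_subset_Iic.2 hjj'.le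
  · refine Set.mem_iInter₂.2 fun i hi => hlt i _ ?_
    exact Nat.lt_succ_of_le (Fin.le_def.1 (Finset.mem_Iic.1 hi))
  · exact Set.mem_iInter₂.1 hmem ⟨j + 1, hsucc⟩ (Finset.mem_Iic.2 hjj')

def FreeGroup.tenNineWord {α : Type*} (a b : α) (n : ℕ) : FreeGroup α :=
  of a ^ (10 * n) * (of b ^ (9 * n))⁻¹

lemma FreeGroup.tenNineWord_inv_mul_tenNineWord_add {α : Type*} (a b : α) (i k : ℕ) :
    (tenNineWord a b i)⁻¹ * tenNineWord a b (i + k)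
      = of b ^ (9 * i) * ((of a ^ k) ^ 10 * (of b ^ k) ^ (-9 : ℤ)) * (of b ^ (9 * i))⁻¹ := by
  simp only [tenNineWord, ← zpow_natCast, ← zpow_mul]
  push_cast
  group

/-- The set `NE` in a free group of rank at least 2 is not equational: for every `N`
there is a sequence `q₁, …, q_m` with `m > N` whose partial intersections
`⋂_{i ≤ j} NE_{q_i}` are strictly decreasing. -/
theorem NE_not_equational {α : Type*} [Nontrivial α] (N : ℕ) :
    ∃ (m : ℕ) (q : Fin m → FreeGroup α), N < m ∧
      StrictAnti (fun j : Fin m => ⋂ i ∈ Finset.Iic j, fiber (NE (FreeGroup α)) (q i)) := by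
  obtain ⟨a, b, hab⟩ := exists_pair_ne α
  let g := FreeGroup.tenNineWord a b
  have hlt (i j : ℕ) (hij : i < j) : g j ∈ fiber (NE (FreeGroup α)) (g i)⁻¹ := by
    obtain ⟨k, rfl⟩ := Nat.exists_eq_add_of_lt hij
    rw [add_assoc, mem_fiber_NE_iff, FreeGroup.tenNineWord_inv_mul_tenNineWord_add]
    exact conj_mem_noncommPowProducts _
      (FreeGroup.of_pow_mul_of_pow_mem_noncommPowProducts hab k.succ_ne_zero)
  have hself (j : ℕ) : g j ∉ fiber (NE (FreeGroup α)) (g j)⁻¹ := by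
    rw [mem_fiber_NE_iff, inv_mul_cancel]
    exact one_notMem_noncommPowProducts
  exact ⟨N + 1, fun i => (g i)⁻¹, N.lt_succ_self, strictAnti_biInter_fiber hlt hself _⟩
end

section
/- Let F be a free group of rank at least 2. Then NE is not a finite union of equational relations: there do not exist finitely many equational relations E₁, …, E_ℓ ⊆ F × F with NE = E₁ ∪ … ∪ E_ℓ. -/
/-!
Write `v i = aⁱ b` in the free group on `a ≠ b`, `q i = (v i)⁹⁰` and `p j = (v j)⁻⁹⁰`.
For `i ≠ j` the pair `(p j, q i)` lies in `NE`, witnessed by `x₁ = (v i)⁹` and `x₂ = (v j)¹⁰`: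
commuting elements of a free group are powers of a common element, so their exponent sums would
be proportional. On the diagonal `q i * p i = 1`, and `x₁¹⁰ = x₂⁹` forces `x₁, x₂` to commute in
a free group: the subgroup they generate is free (Nielsen–Schreier), and if its rank were at least
two, its maps to `ℤ/2` would all kill `x₂` and so be determined by their value at `x₁`.

So if `NE = E₁ ∪ … ∪ E_ℓ`, a nonprincipal ultrafilter on `ℕ` picks one `E_t` containing
arbitrarily long half graphs `p_{s k} ∈ D_{q_{s l}}` (`l < k`), `p_{s k} ∉ D_{q_{s k}}`, and these
produce arbitrarily long strictly decreasing chains of intersections of fibres of `E_t`.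
-/

open FirstOrder

open Subgroup

namespace IsFreeGroup

variable {G : Type*} [Group G] [IsFreeGroup G]

theorem not_commute_of_ne {s t : Generators G} (h : s ≠ t) : ¬Commute (of s) (of t) := by
  classical
  intro hc
  have hmap := hc.map (lift fun r : Generators G =>
    if r = s then Equiv.swap (0 : Fin 3) 1 else if r = t then Equiv.swap (1 : Fin 3) 2 else 1)
  simp only [lift_of, if_neg h.symm] at hmap
  simpa [Equiv.swap_apply_def] using congrArg (· 0) hmap.eq

theorem subsingleton_generators_of_isMulCommutative [IsMulCommutative G] :
    Subsingleton (Generators G) :=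
  ⟨fun _ _ => by_contra fun h => not_commute_of_ne h (mul_comm' _ _)⟩

theorem isCyclic_of_subsingleton_generators [Subsingleton (Generators G)] : IsCyclic G := by
  rcases isEmpty_or_nonempty (Generators G) with _ | ⟨⟨s⟩⟩
  · have : Subsingleton G := (mulEquiv G).symm.injective.subsingleton
    infer_instance
  · have : Unique (Generators G) := uniqueOfSubsingleton s
    exact isCyclic_of_surjective (mulEquiv G) (mulEquiv G).surjective

/-- A homomorphism to `ℤ/2` kills `y`, so it is determined by its value at `x`; but the
generators give two distinct nontrivial such homomorphisms. -/
theorem subsingleton_generators_of_pow_eq_pow {x y : G} (hgen : closure {x, y} = ⊤)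
    {a b : ℕ} (ha : Even a) (hb : Odd b) (h : x ^ a = y ^ b) : Subsingleton (Generators G) := by
  classical
  have hsq : ∀ c : Multiplicative (ZMod 2), c ^ 2 = 1 := by decide
  have hne : ∀ c : Multiplicative (ZMod 2), c ≠ 1 → c = Multiplicative.ofAdd 1 := by decide
  let χ (r : Generators G) : G →* Multiplicative (ZMod 2) :=
    lift fun g => if g = r then Multiplicative.ofAdd 1 else 1
  have hχ : ∀ r, χ r (of r) ≠ 1 := fun r => by simp [χ]
  have hχy : ∀ r, χ r y = 1 := fun r => by
    obtain ⟨k, rfl⟩ := ha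
    obtain ⟨l, rfl⟩ := hb
    have := congrArg (χ r) h
    rwa [map_pow, map_pow, ← two_mul, pow_mul, hsq, one_pow, pow_succ, pow_mul, hsq, one_pow,
      one_mul, eq_comm] at this
  have hχx : ∀ r, χ r x = Multiplicative.ofAdd 1 := fun r => hne _ fun hx => hχ r <| by
    rw [MonoidHom.eq_of_eqOn_dense hgen (f := χ r) (g := 1) (by simp [Set.EqOn, hx, hχy])]; rfl
  refine ⟨fun s t => by_contra fun hst => hχ t ?_⟩
  have hst' : χ s = χ t := MonoidHom.eq_of_eqOn_dense hgen (by simp [Set.EqOn, hχx, hχy])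
  rw [← hst']
  simp [χ, Ne.symm hst]

end IsFreeGroup

theorem Subgroup.closure_mk_pair_eq_top {G : Type*} [Group G] (x y : G) :
    closure {(⟨x, subset_closure (by simp)⟩ : closure ({x, y} : Set G)),
      ⟨y, subset_closure (by simp)⟩} = ⊤ := by
  rw [← closure_closure_coe_preimage]
  congr 1
  ext ⟨g, hg⟩
  simp

theorem exists_zpow_eq_of_isCyclic_closure {G : Type*} [Group G] {u v : G}
    [IsCyclic (closure {u, v})] : ∃ z : G, ∃ k l : ℤ, z ^ k = u ∧ z ^ l = v := by
  obtain ⟨z, hz⟩ := IsCyclic.exists_generator (α := closure ({u, v} : Set G))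
  obtain ⟨k, hk⟩ := mem_zpowers_iff.1 (hz ⟨u, subset_closure (by simp)⟩)
  obtain ⟨l, hl⟩ := mem_zpowers_iff.1 (hz ⟨v, subset_closure (by simp)⟩)
  exact ⟨z, k, l, congrArg Subtype.val hk, congrArg Subtype.val hl⟩

section FreeGroup

variable {G : Type*} [Group G] [IsFreeGroup G]

theorem exists_zpow_eq_of_commute {u v : G} (h : Commute u v) :
    ∃ z : G, ∃ k l : ℤ, z ^ k = u ∧ z ^ l = v := by
  -- `closure {u, v}` is free by Nielsen–Schreier (`subgroupIsFreeOfIsFree`).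
  have : IsMulCommutative (closure {u, v}) := isMulCommutative_closure (by
    rintro _ (rfl | rfl) _ (rfl | rfl)
    exacts [rfl, h, h.symm, rfl])
  have := IsFreeGroup.subsingleton_generators_of_isMulCommutative (G := closure {u, v})
  have := IsFreeGroup.isCyclic_of_subsingleton_generators (G := closure {u, v})
  exact exists_zpow_eq_of_isCyclic_closure

theorem commute_of_pow_eq_pow {x y : G} {a b : ℕ} (ha : Even a) (hb : Odd b)
    (h : x ^ a = y ^ b) : Commute x y := by
  have := IsFreeGroup.subsingleton_generators_of_pow_eq_pow
    (closure_mk_pair_eq_top x y) ha hb (Subtype.ext h)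
  have := IsFreeGroup.isCyclic_of_subsingleton_generators (G := closure {x, y})
  obtain ⟨z, k, l, rfl, rfl⟩ := exists_zpow_eq_of_isCyclic_closure (u := x) (v := y)
  exact (Commute.refl z).zpow_zpow k l

end FreeGroup

/-- Compare exponent sums: the images in `ℤ²` of two powers of a common element are parallel. -/
theorem FreeGroup.not_commute_pow_mul_of_pow {α : Type*} {a b : α} (hab : a ≠ b) {i j m n : ℕ}
    (hij : i ≠ j) (hm : m ≠ 0) (hn : n ≠ 0) :
    ¬Commute ((of a ^ i * of b) ^ m) ((of a ^ j * of b) ^ n) := by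
  classical
  intro h
  obtain ⟨z, k, l, hk, hl⟩ := exists_zpow_eq_of_commute h
  let ψ : FreeGroup α →* Multiplicative (ℤ × ℤ) :=
    lift fun c => Multiplicative.ofAdd (if c = a then (1, 0) else (0, 1))
  have hψ (i m : ℕ) :
      Multiplicative.toAdd (ψ ((of a ^ i * of b) ^ m)) = ((m * i : ℤ), (m : ℤ)) := by
    simp [ψ, hab.symm]
  have hu := hψ i m
  have hv := hψ j n
  rw [← hk, map_zpow, toAdd_zpow] at hu
  rw [← hl, map_zpow, toAdd_zpow] at hv
  simp only [Prod.ext_iff, Prod.smul_fst, Prod.smul_snd, smul_eq_mul] at hu hv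
  set w := Multiplicative.toAdd (ψ z)
  have : (m * n : ℤ) * i = (m * n) * j := by
    linear_combination
      (-l * w.2) * hu.1 - (m * i : ℤ) * hv.2 + (l * w.1) * hu.2 + (m : ℤ) * hv.1
  exact hij (by exact_mod_cast mul_left_cancel₀ (by positivity) this)

theorem Filter.exists_fin_chain {ι : Type*} {U : Filter ι} [U.NeBot] {S : Set ι} (hS : S ∈ U)
    {R : ι → ι → Prop} (hR : ∀ i ∈ S, {j | R i j} ∈ U) :
    ∀ m, ∃ s : Fin m → ι, (∀ k, s k ∈ S) ∧ ∀ l k, l < k → R (s l) (s k)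
  | 0 => ⟨Fin.elim0, fun k => k.elim0, fun l => l.elim0⟩
  | m + 1 => by
    obtain ⟨s, hsS, hsR⟩ := exists_fin_chain hS hR m
    obtain ⟨x, hxS, hxR⟩ :=
      Filter.nonempty_of_mem (Filter.inter_mem hS (Filter.iInter_mem.2 fun l => hR _ (hsS l)))
    rw [Set.mem_iInter] at hxR
    refine ⟨Fin.snoc s x, Fin.lastCases (by simpa) (by simpa), fun l k hlk => ?_⟩
    induction k using Fin.lastCases with
    | last =>
      induction l using Fin.lastCases with
      | last => exact absurd hlk (lt_irrefl _)
      | cast l => simpa using hxR l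
    | cast k =>
      induction l using Fin.lastCases with
      | last => exact absurd hlk (Fin.castSucc_lt_last k).not_gt
      | cast l => simpa using hsR l k (Fin.castSucc_lt_castSucc_iff.1 hlk)

section Equational

variable {F : Type*}

def HasLadder (D : Set (F × F)) (m : ℕ) : Prop :=
  ∃ p q : Fin m → F, (∀ k, (p k, q k) ∉ D) ∧ ∀ l k, l < k → (p k, q l) ∈ D

theorem not_isEquational_of_forall_hasLadder {D : Set (F × F)} (h : ∀ m, HasLadder D m) :
    ¬IsEquational D := by
  rintro ⟨N, hN⟩
  obtain ⟨p, q, hdiag, hlow⟩ := h (N + 1)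
  suffices StrictAnti fun j : Fin (N + 1) => ⋂ i ∈ Finset.Iic j, fiber D (q i) by
    have := hN _ q this
    omega
  intro j₁ j₂ hj
  have hanti : (⋂ i ∈ Finset.Iic j₂, fiber D (q i)) ⊆ ⋂ i ∈ Finset.Iic j₁, fiber D (q i) :=
    Set.biInter_subset_biInter_left fun _ hi =>
      Finset.mem_Iic.2 ((Finset.mem_Iic.1 hi).trans hj.le)
  let k : Fin (N + 1) := ⟨j₁ + 1, by omega⟩
  refine hanti.ssubset_of_not_subset fun hsub => hdiag k ?_
  have hk : p k ∈ ⋂ i ∈ Finset.Iic j₁, fiber D (q i) := by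
    simp only [Set.mem_iInter, Finset.mem_Iic]
    exact fun i hi => hlow i k (Nat.lt_succ_of_le hi)
  have := hsub hk
  simp only [Set.mem_iInter, Finset.mem_Iic] at this
  exact this k (Nat.succ_le_of_lt hj)

theorem exists_not_isEquational_of_ladder_in_iUnion {ι : Type*} [Finite ι]
    (E : ι → Set (F × F)) (p q : ℕ → F) (hlow : ∀ i j, i < j → (p j, q i) ∈ ⋃ t, E t)
    (hdiag : ∀ i t, (p i, q i) ∉ E t) : ∃ t, ¬IsEquational (E t) := by
  let U := Filter.hyperfilter ℕ
  have hcol (i : ℕ) : ∃ t, ∀ᶠ j in U, (p j, q i) ∈ E t := by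
    refine Ultrafilter.eventually_exists_iff.1 ?_
    filter_upwards [Nat.hyperfilter_le_atTop (Filter.eventually_gt_atTop i)] with j hj
    simpa using hlow i j hj
  obtain ⟨t, ht⟩ : ∃ t, ∀ᶠ i in U, ∀ᶠ j in U, (p j, q i) ∈ E t :=
    Ultrafilter.eventually_exists_iff.1 (Filter.Eventually.of_forall hcol)
  refine ⟨t, not_isEquational_of_forall_hasLadder fun m => ?_⟩
  obtain ⟨s, -, hs⟩ := Filter.exists_fin_chain ht (fun i hi => hi) m
  exact ⟨p ∘ s, q ∘ s, fun k => hdiag _ t, hs⟩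

end Equational

section NE

variable {G : Type*} [Group G]

theorem inv_pow_mem_NE {u w : G} (h : ¬Commute (u ^ 9) (w ^ 10)) :
    ((w ^ 90)⁻¹, u ^ 90) ∈ NE G :=
  ⟨u ^ 9, w ^ 10, by simp only [← pow_mul, zpow_neg, zpow_ofNat], h⟩

theorem notMem_NE_of_mul_eq_one [IsFreeGroup G] {p q : G} (h : q * p = 1) : (p, q) ∉ NE G := by
  rintro ⟨x₁, x₂, hx, hne⟩
  refine hne (commute_of_pow_eq_pow (a := 10) (b := 9) (by decide) (by decide) ?_)
  rw [h, eq_comm, zpow_neg, mul_inv_eq_one] at hx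
  exact_mod_cast hx

end NE

/-- `NE` is not a finite union of equational relations. -/
theorem NE_not_finite_union_equational {α : Type*} [Nontrivial α] :
    ¬ ∃ (ℓ : ℕ) (E : Fin ℓ → Set (FreeGroup α × FreeGroup α)),
      (∀ a, IsEquational (E a)) ∧ NE (FreeGroup α) = ⋃ a, E a := by
  rintro ⟨ℓ, E, hE, hNE⟩
  obtain ⟨a, b, hab⟩ := exists_pair_ne α
  let v (i : ℕ) : FreeGroup α := FreeGroup.of a ^ i * FreeGroup.of b
  obtain ⟨t, ht⟩ := exists_not_isEquational_of_ladder_in_iUnion E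
    (fun j => (v j ^ 90)⁻¹) (fun i => v i ^ 90)
    (fun i j hij => hNE ▸ inv_pow_mem_NE
      (FreeGroup.not_commute_pow_mul_of_pow hab hij.ne (by decide) (by decide)))
    (fun _ t hi => notMem_NE_of_mul_eq_one (mul_inv_cancel _) (hNE ▸ Set.mem_iUnion_of_mem t hi))
  exact ht (hE t)
end

section
/- Let F be a free group. If a, b ∈ F and there exist nonzero integers m, n such that a^m·b^n = b^n·a^m, then a·b = b·a. -/
section UniqueRoots

variable {G : Type*} [Group G] [IsMulTorsionFree G] {a b : G} {n : ℤ}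

/-- `IsMulTorsionFree` makes `n`-th roots unique, so conjugation by `b`, which fixes `a ^ n`,
also fixes `a`. -/
theorem Commute.of_zpow_left (hn : n ≠ 0) (h : Commute (a ^ n) b) : Commute a b := by
  have hconj : (b * a * b⁻¹) ^ n = a ^ n := by
    rw [conj_zpow, ← h.eq, mul_inv_cancel_right]
  exact (mul_inv_eq_iff_eq_mul.mp (zpow_left_injective hn hconj)).symm

theorem Commute.of_zpow_right (hn : n ≠ 0) (h : Commute a (b ^ n)) : Commute a b :=
  (h.symm.of_zpow_left hn).symm

end UniqueRoots

/-- In a free group, if nonzero powers `a^m` and `b^n` commute, then `a` and `b` commute. -/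
theorem FreeGroup.commute_of_zpow_commute {α : Type*} (a b : FreeGroup α) (m n : ℤ)
    (hm : m ≠ 0) (hn : n ≠ 0) (h : a ^ m * b ^ n = b ^ n * a ^ m) : a * b = b * a :=
  ((Commute.of_zpow_right hn h).of_zpow_left hm).eq
end
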